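/- arXiv:math/0601180 — 4 statements merged into one kernel-verified Lean document; each statement's English description precedes it below -/
import Mathlib

section
/- With F, T as above (f continuous and positive on (0,r], C(r) finite, λ + a < C(r)^{-1}, Θ > 0), the operator T : F → F is Lipschitz continuous with respect to the sup norm: ‖Tu − Tv‖ ≤ (a+λ) C(r) ‖u − v‖ for all u, v ∈ F; in particular T is a contraction on F since (a+λ)C(r) < 1. -/
open MeasureTheory Set intervalIntegral

/-- The integral operator `T`. -/
noncomputable def Tint (n : ℕ) (f u : ℝ → ℝ) (c Θ t : ℝ) : ℝ :=
  Θ - ∫ σ in (0:ℝ)..t, (∫ s in (0:ℝ)..σ, f s ^ (n - 1) * (c * u s)) / f σ ^ (n - 1)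

/-- The constant `C(r) = ∫₀^r f(σ)^{1-n} ∫₀^σ f(s)^{n-1} ds dσ`. -/
noncomputable def Cr (n : ℕ) (f : ℝ → ℝ) (r : ℝ) : ℝ :=
  ∫ σ in (0:ℝ)..r, (∫ s in (0:ℝ)..σ, f s ^ (n - 1)) / f σ ^ (n - 1)

/-- `T` is Lipschitz on `F` with constant `(a+λ)C(r) < 1`, hence a contraction. -/
theorem T_contraction (n : ℕ) (hn : 2 ≤ n) (r : ℝ) (hr : 0 < r)
    (f : ℝ → ℝ) (hf : ContinuousOn f (Icc 0 r)) (hf0 : f 0 = 0)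
    (hfpos : ∀ t ∈ Ioc 0 r, 0 < f t)
    (hC : 0 < Cr n f r)
    (lam a Θ : ℝ) (hlam : 0 ≤ lam) (ha : 0 < a) (hΘ : 0 < Θ)
    (hsmall : lam + a < (Cr n f r)⁻¹)
    (u v : ℝ → ℝ)
    (hu : ContinuousOn u (Icc 0 r)) (hu0 : ∀ t ∈ Icc 0 r, 0 ≤ u t ∧ u t ≤ Θ)
    (hv : ContinuousOn v (Icc 0 r)) (hv0 : ∀ t ∈ Icc 0 r, 0 ≤ v t ∧ v t ≤ Θ) :
    (∀ M : ℝ, (∀ s ∈ Icc 0 r, |u s - v s| ≤ M) →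
      ∀ t ∈ Icc 0 r,
        |Tint n f u (a + lam) Θ t - Tint n f v (a + lam) Θ t| ≤ (a + lam) * Cr n f r * M) ∧
      (a + lam) * Cr n f r < 1 := by
  have hc : 0 < a + lam := by linarith
  set c : ℝ := a + lam with hcdef
  -- nonnegativity of f
  have hf_nonneg : ∀ s ∈ Icc (0:ℝ) r, 0 ≤ f s := by
    intro s hs
    rcases eq_or_lt_of_le hs.1 with h | h
    · rw [← h, hf0]
    · exact (hfpos s ⟨h, hs.2⟩).le
  have hfm : ContinuousOn (fun s => f s ^ (n - 1)) (Icc 0 r) := hf.pow (n - 1)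
  have hfm_nonneg : ∀ s ∈ Icc (0:ℝ) r, 0 ≤ f s ^ (n - 1) :=
    fun s hs => pow_nonneg (hf_nonneg s hs) _
  have hfm_int : ∀ σ ∈ Icc (0:ℝ) r, IntervalIntegrable (fun s => f s ^ (n - 1)) volume 0 σ := by
    intro σ hσ
    apply (hfm.mono ?_).intervalIntegrable
    rw [uIcc_of_le hσ.1]
    exact Icc_subset_Icc le_rfl hσ.2
  set F1 : ℝ → ℝ := fun σ => ∫ s in (0:ℝ)..σ, f s ^ (n - 1) with hF1def
  set h : ℝ → ℝ := fun σ => F1 σ / f σ ^ (n - 1) with hhdef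
  have hCr_eq : Cr n f r = ∫ σ in (0:ℝ)..r, h σ := rfl
  have hF1_nonneg : ∀ σ ∈ Icc (0:ℝ) r, 0 ≤ F1 σ := by
    intro σ hσ
    exact intervalIntegral.integral_nonneg hσ.1
      (fun s hs => hfm_nonneg s ⟨hs.1, le_trans hs.2 hσ.2⟩)
  have hh_nonneg : ∀ σ ∈ Icc (0:ℝ) r, 0 ≤ h σ := by
    intro σ hσ
    exact div_nonneg (hF1_nonneg σ hσ) (hfm_nonneg σ hσ)
  -- integrability of h from positivity of Cr
  have hInt_h : IntervalIntegrable h volume 0 r := by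
    by_contra hcon
    rw [hCr_eq, intervalIntegral.integral_undef hcon] at hC
    exact lt_irrefl _ hC
  -- generic facts about the integrand associated to a function w ∈ F
  have key : ∀ w : ℝ → ℝ, ContinuousOn w (Icc 0 r) → (∀ s ∈ Icc (0:ℝ) r, 0 ≤ w s ∧ w s ≤ Θ) →
      (∀ σ ∈ Icc (0:ℝ) r, IntervalIntegrable (fun s => f s ^ (n - 1) * (c * w s)) volume 0 σ) ∧
      (∀ t ∈ Icc (0:ℝ) r, IntervalIntegrable
        (fun σ => (∫ s in (0:ℝ)..σ, f s ^ (n - 1) * (c * w s)) / f σ ^ (n - 1)) volume 0 t) := by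
    intro w hw hw0
    have hcw : ContinuousOn (fun s => f s ^ (n - 1) * (c * w s)) (Icc 0 r) :=
      hfm.mul (continuousOn_const.mul hw)
    have hint : ∀ σ ∈ Icc (0:ℝ) r,
        IntervalIntegrable (fun s => f s ^ (n - 1) * (c * w s)) volume 0 σ := by
      intro σ hσ
      apply (hcw.mono ?_).intervalIntegrable
      rw [uIcc_of_le hσ.1]
      exact Icc_subset_Icc le_rfl hσ.2
    refine ⟨hint, ?_⟩
    -- Fw is continuous on Icc 0 r
    have hFw_cont : ContinuousOn (fun σ => ∫ s in (0:ℝ)..σ, f s ^ (n - 1) * (c * w s))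
        (Icc 0 r) := by
      have : IntegrableOn (fun s => f s ^ (n - 1) * (c * w s)) (uIcc 0 r) volume := by
        rw [uIcc_of_le hr.le]
        exact hcw.integrableOn_compact isCompact_Icc
      have := intervalIntegral.continuousOn_primitive_interval this
      rwa [uIcc_of_le hr.le] at this
    -- pointwise bound on Fw
    have hFw_bound : ∀ σ ∈ Icc (0:ℝ) r,
        |∫ s in (0:ℝ)..σ, f s ^ (n - 1) * (c * w s)| ≤ c * Θ * F1 σ := by
      intro σ hσ
      calc |∫ s in (0:ℝ)..σ, f s ^ (n - 1) * (c * w s)|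
          ≤ ∫ s in (0:ℝ)..σ, |f s ^ (n - 1) * (c * w s)| :=
            intervalIntegral.abs_integral_le_integral_abs hσ.1
        _ ≤ ∫ s in (0:ℝ)..σ, c * Θ * f s ^ (n - 1) := by
            apply intervalIntegral.integral_mono_on hσ.1 (hint σ hσ).abs
              ((hfm_int σ hσ).const_mul _)
            intro s hs
            have hs' : s ∈ Icc (0:ℝ) r := ⟨hs.1, le_trans hs.2 hσ.2⟩
            have h1 := hfm_nonneg s hs'
            have h2 := (hw0 s hs').1
            have h3 := (hw0 s hs').2
            rw [abs_of_nonneg (by positivity)]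
            calc f s ^ (n - 1) * (c * w s) = f s ^ (n - 1) * c * w s := by ring
              _ ≤ f s ^ (n - 1) * c * Θ :=
                  mul_le_mul_of_nonneg_left h3 (mul_nonneg h1 hc.le)
              _ = c * Θ * f s ^ (n - 1) := by ring
        _ = c * Θ * F1 σ := intervalIntegral.integral_const_mul _ _
    -- Gw is continuous on Ioc 0 r
    have hGw_cont : ContinuousOn
        (fun σ => (∫ s in (0:ℝ)..σ, f s ^ (n - 1) * (c * w s)) / f σ ^ (n - 1)) (Ioc 0 r) := by
      apply (hFw_cont.mono Ioc_subset_Icc_self).div (hfm.mono Ioc_subset_Icc_self)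
      intro σ hσ
      exact (pow_pos (hfpos σ hσ) _).ne'
    intro t ht
    rw [intervalIntegrable_iff_integrableOn_Ioc_of_le ht.1]
    have hsub : Ioc (0:ℝ) t ⊆ Ioc 0 r := Ioc_subset_Ioc le_rfl ht.2
    have hmeas : AEStronglyMeasurable
        (fun σ => (∫ s in (0:ℝ)..σ, f s ^ (n - 1) * (c * w s)) / f σ ^ (n - 1))
        (volume.restrict (Ioc 0 t)) :=
      (hGw_cont.mono hsub).aestronglyMeasurable measurableSet_Ioc
    have hbound_int : IntegrableOn (fun σ => c * Θ * h σ) (Ioc 0 t) volume := by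
      have : IntegrableOn h (Ioc 0 r) volume :=
        (intervalIntegrable_iff_integrableOn_Ioc_of_le hr.le).1 hInt_h
      exact (this.mono_set hsub).const_mul _
    apply Integrable.mono' hbound_int hmeas
    rw [ae_restrict_iff' measurableSet_Ioc]
    filter_upwards with σ hσ
    have hσ' : σ ∈ Icc (0:ℝ) r := ⟨hσ.1.le, le_trans hσ.2 ht.2⟩
    have hd : 0 < f σ ^ (n - 1) := pow_pos (hfpos σ ⟨hσ.1, le_trans hσ.2 ht.2⟩) _
    rw [Real.norm_eq_abs, abs_div, abs_of_pos hd]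
    have : c * Θ * h σ = (c * Θ * F1 σ) / f σ ^ (n - 1) := by
      simp only [hhdef]; ring
    rw [this]
    exact div_le_div_of_nonneg_right (hFw_bound σ hσ') hd.le
  obtain ⟨hint_u, hIG_u⟩ := key u hu hu0
  obtain ⟨hint_v, hIG_v⟩ := key v hv hv0
  constructor
  · intro M hM t ht
    have hM0 : 0 ≤ M := le_trans (abs_nonneg _) (hM 0 ⟨le_rfl, hr.le⟩)
    -- pointwise bound on the difference of the integrands
    have hptwise : ∀ σ ∈ Icc (0:ℝ) t,
        |(∫ s in (0:ℝ)..σ, f s ^ (n - 1) * (c * v s)) / f σ ^ (n - 1) -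
          (∫ s in (0:ℝ)..σ, f s ^ (n - 1) * (c * u s)) / f σ ^ (n - 1)| ≤ c * M * h σ := by
      intro σ hσ
      have hσ' : σ ∈ Icc (0:ℝ) r := ⟨hσ.1, le_trans hσ.2 ht.2⟩
      rcases eq_or_lt_of_le hσ.1 with h0 | h0
      · subst h0
        simp [intervalIntegral.integral_same, hhdef, hF1def]
      · have hd : 0 < f σ ^ (n - 1) := pow_pos (hfpos σ ⟨h0, hσ'.2⟩) _
        rw [div_sub_div_same, abs_div, abs_of_pos hd]
        have hnum : |(∫ s in (0:ℝ)..σ, f s ^ (n - 1) * (c * v s)) -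
            (∫ s in (0:ℝ)..σ, f s ^ (n - 1) * (c * u s))| ≤ c * M * F1 σ := by
          rw [← intervalIntegral.integral_sub (hint_v σ hσ') (hint_u σ hσ')]
          calc |∫ s in (0:ℝ)..σ, (f s ^ (n - 1) * (c * v s) - f s ^ (n - 1) * (c * u s))|
              ≤ ∫ s in (0:ℝ)..σ, |f s ^ (n - 1) * (c * v s) - f s ^ (n - 1) * (c * u s)| :=
                intervalIntegral.abs_integral_le_integral_abs hσ.1
            _ ≤ ∫ s in (0:ℝ)..σ, c * M * f s ^ (n - 1) := by
                apply intervalIntegral.integral_mono_on hσ.1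
                  ((hint_v σ hσ').sub (hint_u σ hσ')).abs ((hfm_int σ hσ').const_mul _)
                intro s hs
                have hs' : s ∈ Icc (0:ℝ) r := ⟨hs.1, le_trans hs.2 hσ'.2⟩
                have h1 := hfm_nonneg s hs'
                have h2 : |u s - v s| ≤ M := hM s hs'
                have : f s ^ (n - 1) * (c * v s) - f s ^ (n - 1) * (c * u s) =
                    f s ^ (n - 1) * c * (v s - u s) := by ring
                rw [this, abs_mul, abs_of_nonneg (mul_nonneg h1 hc.le), abs_sub_comm]
                calc f s ^ (n - 1) * c * |u s - v s| ≤ f s ^ (n - 1) * c * M :=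
                      mul_le_mul_of_nonneg_left h2 (mul_nonneg h1 hc.le)
                  _ = c * M * f s ^ (n - 1) := by ring
            _ = c * M * F1 σ := intervalIntegral.integral_const_mul _ _
        calc |(∫ s in (0:ℝ)..σ, f s ^ (n - 1) * (c * v s)) -
              (∫ s in (0:ℝ)..σ, f s ^ (n - 1) * (c * u s))| / f σ ^ (n - 1)
            ≤ (c * M * F1 σ) / f σ ^ (n - 1) := div_le_div_of_nonneg_right hnum hd.le
          _ = c * M * h σ := by simp only [hhdef]; ring
    -- integrability of the difference and of the bound on [0, t]
    have hIu := hIG_u t ht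
    have hIv := hIG_v t ht
    have hInt_h_t : IntervalIntegrable h volume 0 t := by
      apply hInt_h.mono_set
      rw [uIcc_of_le ht.1, uIcc_of_le hr.le]
      exact Icc_subset_Icc le_rfl ht.2
    have hInt_h_tr : IntervalIntegrable h volume t r := by
      apply hInt_h.mono_set
      rw [uIcc_of_le ht.2, uIcc_of_le hr.le]
      exact Icc_subset_Icc ht.1 le_rfl
    have hdiff : Tint n f u c Θ t - Tint n f v c Θ t =
        ∫ σ in (0:ℝ)..t,
          ((∫ s in (0:ℝ)..σ, f s ^ (n - 1) * (c * v s)) / f σ ^ (n - 1) -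
           (∫ s in (0:ℝ)..σ, f s ^ (n - 1) * (c * u s)) / f σ ^ (n - 1)) := by
      rw [intervalIntegral.integral_sub hIv hIu, Tint, Tint]
      ring
    have hinth_le : ∫ σ in (0:ℝ)..t, h σ ≤ Cr n f r := by
      have hsplit := intervalIntegral.integral_add_adjacent_intervals hInt_h_t hInt_h_tr
      have hpos : 0 ≤ ∫ σ in t..r, h σ :=
        intervalIntegral.integral_nonneg ht.2
          (fun σ hσ => hh_nonneg σ ⟨le_trans ht.1 hσ.1, hσ.2⟩)
      rw [hCr_eq]
      linarith
    calc |Tint n f u c Θ t - Tint n f v c Θ t|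
        = |∫ σ in (0:ℝ)..t,
            ((∫ s in (0:ℝ)..σ, f s ^ (n - 1) * (c * v s)) / f σ ^ (n - 1) -
             (∫ s in (0:ℝ)..σ, f s ^ (n - 1) * (c * u s)) / f σ ^ (n - 1))| := by rw [hdiff]
      _ ≤ ∫ σ in (0:ℝ)..t,
            |(∫ s in (0:ℝ)..σ, f s ^ (n - 1) * (c * v s)) / f σ ^ (n - 1) -
             (∫ s in (0:ℝ)..σ, f s ^ (n - 1) * (c * u s)) / f σ ^ (n - 1)| :=
          intervalIntegral.abs_integral_le_integral_abs ht.1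
      _ ≤ ∫ σ in (0:ℝ)..t, c * M * h σ := by
          apply intervalIntegral.integral_mono_on ht.1 (hIv.sub hIu).abs
            (hInt_h_t.const_mul _) hptwise
      _ = c * M * ∫ σ in (0:ℝ)..t, h σ := intervalIntegral.integral_const_mul _ _
      _ ≤ c * M * Cr n f r := by
          apply mul_le_mul_of_nonneg_left hinth_le (by positivity)
      _ = c * Cr n f r * M := by ring
  · have h1 : (lam + a) * Cr n f r < (Cr n f r)⁻¹ * Cr n f r :=
      mul_lt_mul_of_pos_right hsmall hC
    rw [inv_mul_cancel₀ hC.ne'] at h1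
    calc c * Cr n f r = (lam + a) * Cr n f r := by rw [hcdef]; ring
      _ < 1 := h1
end

section
/- With the hypotheses above, for every u ∈ F the function Tu is differentiable on (0,r) and its derivative satisfies |(Tu)'(t)| ≤ Θ C(r)^{-1} · (1/f(t)^{n-1}) ∫₀^t f(s)^{n-1} ds =: h(t), where h is continuous on [0,r]; consequently the family T(F) is equicontinuous. -/
open MeasureTheory Set intervalIntegral

/-- The function `h(t) = f(t)^{1-n} ∫₀^t f(s)^{n-1} ds`. -/
noncomputable def hfun (n : ℕ) (f : ℝ → ℝ) (t : ℝ) : ℝ :=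
  (∫ s in (0:ℝ)..t, f s ^ (n - 1)) / f t ^ (n - 1)

/-- for `u ∈ F`, `Tu` is differentiable on `(0,r)` with
`|(Tu)'(t)| ≤ Θ C(r)⁻¹ h(t)`, and the family `T(F)` is equicontinuous. -/
theorem T_deriv_bound_and_equicontinuous (n : ℕ) (hn : 2 ≤ n) (r : ℝ) (hr : 0 < r)
    (f : ℝ → ℝ) (hf : ContinuousOn f (Icc 0 r)) (hf0 : f 0 = 0)
    (hf'0 : HasDerivAt f 1 0)
    (hfpos : ∀ t ∈ Ioc 0 r, 0 < f t)
    (hC : 0 < Cr n f r)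
    (hh : ContinuousOn (hfun n f) (Icc 0 r)) (hh0 : hfun n f 0 = 0)
    (lam a Θ : ℝ) (hlam : 0 ≤ lam) (ha : 0 < a) (hΘ : 0 < Θ)
    (hsmall : lam + a < (Cr n f r)⁻¹) :
    (∀ u : ℝ → ℝ, ContinuousOn u (Icc 0 r) → (∀ t ∈ Icc 0 r, 0 ≤ u t ∧ u t ≤ Θ) →
      ∀ t ∈ Ioo 0 r, ∃ d : ℝ, HasDerivAt (Tint n f u (a + lam) Θ) d t ∧
        |d| ≤ Θ * (Cr n f r)⁻¹ * hfun n f t) ∧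
    (∀ ε > (0:ℝ), ∃ δ > (0:ℝ), ∀ u : ℝ → ℝ, ContinuousOn u (Icc 0 r) →
      (∀ t ∈ Icc 0 r, 0 ≤ u t ∧ u t ≤ Θ) →
      ∀ s ∈ Icc 0 r, ∀ t ∈ Icc 0 r, |s - t| < δ →
        |Tint n f u (a + lam) Θ s - Tint n f u (a + lam) Θ t| < ε) := by
  set c := a + lam with hcdef
  have hc : 0 < c := by positivity
  have hcC : c < (Cr n f r)⁻¹ := by rw [hcdef]; linarith
  -- f is nonnegative on [0,r]
  have hfnn : ∀ s ∈ Icc (0:ℝ) r, 0 ≤ f s := by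
    intro s hs
    rcases eq_or_lt_of_le hs.1 with h | h
    · simp [← h, hf0]
    · exact (hfpos s ⟨h, hs.2⟩).le
  -- max of hfun on [0,r]
  obtain ⟨m, hm, hM'⟩ := isCompact_Icc.exists_isMaxOn ⟨0, le_refl (0:ℝ), hr.le⟩ hh
  have hM : ∀ y ∈ Icc (0:ℝ) r, hfun n f y ≤ hfun n f m := fun y hy => hM' hy
  set M := hfun n f m with hMdef
  have hM0 : 0 ≤ M := by
    have := hM 0 ⟨le_refl _, hr.le⟩
    rwa [hh0] at this
  -- hfun is nonnegative on (0,r]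
  have hhfun_nn : ∀ σ ∈ Ioc (0:ℝ) r, 0 ≤ hfun n f σ := by
    intro σ hσ
    have hd : 0 < f σ ^ (n - 1) := pow_pos (hfpos σ hσ) _
    have hnum : 0 ≤ ∫ s in (0:ℝ)..σ, f s ^ (n - 1) := by
      apply intervalIntegral.integral_nonneg hσ.1.le
      intro x hx
      exact pow_nonneg (hfnn x ⟨hx.1, hx.2.trans hσ.2⟩) _
    exact div_nonneg hnum hd.le
  -- Main per-u facts
  have main : ∀ u : ℝ → ℝ, ContinuousOn u (Icc 0 r) → (∀ t ∈ Icc 0 r, 0 ≤ u t ∧ u t ≤ Θ) →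
      (∀ σ ∈ Ioc (0:ℝ) r, 0 ≤ (∫ s in (0:ℝ)..σ, f s ^ (n - 1) * (c * u s)) / f σ ^ (n - 1) ∧
        (∫ s in (0:ℝ)..σ, f s ^ (n - 1) * (c * u s)) / f σ ^ (n - 1) ≤ c * Θ * hfun n f σ) ∧
      (∀ x ∈ Icc (0:ℝ) r, IntervalIntegrable
        (fun σ => (∫ s in (0:ℝ)..σ, f s ^ (n - 1) * (c * u s)) / f σ ^ (n - 1)) volume 0 x) ∧
      ContinuousOn (fun σ => (∫ s in (0:ℝ)..σ, f s ^ (n - 1) * (c * u s)) / f σ ^ (n - 1))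
        (Ioc 0 r) := by
    intro u hu hub
    set φ : ℝ → ℝ := fun s => f s ^ (n - 1) * (c * u s) with hφdef
    set g : ℝ → ℝ := fun σ => (∫ s in (0:ℝ)..σ, φ s) / f σ ^ (n - 1) with hgdef
    have hφc : ContinuousOn φ (Icc 0 r) :=
      (hf.pow _).mul (continuousOn_const.mul hu)
    have hφint : IntegrableOn φ (Icc 0 r) := hφc.integrableOn_Icc
    have hψc : ContinuousOn (fun s => f s ^ (n - 1)) (Icc 0 r) := hf.pow _
    have hNc : ContinuousOn (fun σ => ∫ s in (0:ℝ)..σ, φ s) (Icc 0 r) := by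
      have := intervalIntegral.continuousOn_primitive_interval (a := 0) (b := r)
        (μ := volume) (f := φ) (by rwa [uIcc_of_le hr.le])
      rwa [uIcc_of_le hr.le] at this
    -- the pointwise bound
    have hbound : ∀ σ ∈ Ioc (0:ℝ) r, 0 ≤ g σ ∧ g σ ≤ c * Θ * hfun n f σ := by
      intro σ hσ
      have hd : 0 < f σ ^ (n - 1) := pow_pos (hfpos σ hσ) _
      have hIccσ : Icc (0:ℝ) σ ⊆ Icc 0 r := Icc_subset_Icc le_rfl hσ.2
      have hφint' : IntervalIntegrable φ volume 0 σ := by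
        apply ContinuousOn.intervalIntegrable
        rw [uIcc_of_le hσ.1.le]
        exact hφc.mono hIccσ
      have hψint' : IntervalIntegrable (fun s => c * Θ * f s ^ (n - 1)) volume 0 σ := by
        apply ContinuousOn.intervalIntegrable
        rw [uIcc_of_le hσ.1.le]
        exact continuousOn_const.mul (hψc.mono hIccσ)
      have hnum0 : 0 ≤ ∫ s in (0:ℝ)..σ, φ s := by
        apply intervalIntegral.integral_nonneg hσ.1.le
        intro x hx
        have hx' : x ∈ Icc (0:ℝ) r := hIccσ hx
        have hux := hub x hx'
        have hfx : 0 ≤ f x ^ (n - 1) := pow_nonneg (hfnn x hx') _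
        exact mul_nonneg hfx (mul_nonneg hc.le hux.1)
      have hnum1 : (∫ s in (0:ℝ)..σ, φ s) ≤ ∫ s in (0:ℝ)..σ, c * Θ * f s ^ (n - 1) := by
        apply intervalIntegral.integral_mono_on hσ.1.le hφint' hψint'
        intro x hx
        have hx' : x ∈ Icc (0:ℝ) r := hIccσ hx
        have hfx : 0 ≤ f x ^ (n - 1) := pow_nonneg (hfnn x hx') _
        have hux := hub x hx'
        calc f x ^ (n - 1) * (c * u x) ≤ f x ^ (n - 1) * (c * Θ) := by
              apply mul_le_mul_of_nonneg_left _ hfx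
              exact mul_le_mul_of_nonneg_left hux.2 hc.le
          _ = c * Θ * f x ^ (n - 1) := by ring
      have hnum1' : (∫ s in (0:ℝ)..σ, φ s) ≤ c * Θ * ∫ s in (0:ℝ)..σ, f s ^ (n - 1) := by
        rwa [intervalIntegral.integral_const_mul] at hnum1
      refine ⟨div_nonneg hnum0 hd.le, ?_⟩
      have h2 : g σ ≤ (c * Θ * ∫ s in (0:ℝ)..σ, f s ^ (n - 1)) / f σ ^ (n - 1) :=
        (div_le_div_iff_of_pos_right hd).mpr hnum1'
      calc g σ ≤ (c * Θ * ∫ s in (0:ℝ)..σ, f s ^ (n - 1)) / f σ ^ (n - 1) := h2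
        _ = c * Θ * hfun n f σ := by rw [hfun, mul_div_assoc]
    -- continuity of g on (0,r]
    have hgc : ContinuousOn g (Ioc 0 r) := by
      apply ContinuousOn.div (hNc.mono Ioc_subset_Icc_self)
        (hψc.mono Ioc_subset_Icc_self)
      intro σ hσ
      exact (pow_pos (hfpos σ hσ) _).ne'
    -- interval integrability of g on [0,x]
    have hgint : ∀ x ∈ Icc (0:ℝ) r, IntervalIntegrable g volume 0 x := by
      intro x hx
      rw [intervalIntegrable_iff, uIoc_of_le hx.1]
      have hmeas : AEStronglyMeasurable g (volume.restrict (Ioc 0 x)) :=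
        (hgc.mono (Ioc_subset_Ioc le_rfl hx.2)).aestronglyMeasurable measurableSet_Ioc
      apply Integrable.mono' (integrable_const (c * Θ * M)) hmeas
      rw [ae_restrict_iff' measurableSet_Ioc]
      filter_upwards with σ hσ
      have hσ' : σ ∈ Ioc (0:ℝ) r := ⟨hσ.1, hσ.2.trans hx.2⟩
      have hb := hbound σ hσ'
      rw [Real.norm_eq_abs, abs_of_nonneg hb.1]
      calc g σ ≤ c * Θ * hfun n f σ := hb.2
        _ ≤ c * Θ * M := by
            apply mul_le_mul_of_nonneg_left (hM σ ⟨hσ'.1.le, hσ'.2⟩)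
            positivity
    exact ⟨hbound, hgint, hgc⟩
  constructor
  · -- differentiability with derivative bound
    intro u hu hub t ht
    obtain ⟨hbound, hgint, hgc⟩ := main u hu hub
    set g : ℝ → ℝ := fun σ => (∫ s in (0:ℝ)..σ, f s ^ (n - 1) * (c * u s)) / f σ ^ (n - 1)
      with hgdef
    have hgc' : ContinuousOn g (Ioo 0 r) := hgc.mono Ioo_subset_Ioc_self
    have hP : HasDerivAt (fun x => ∫ σ in (0:ℝ)..x, g σ) (g t) t := by
      apply intervalIntegral.integral_hasDerivAt_right (hgint t ⟨ht.1.le, ht.2.le⟩)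
      · exact hgc'.stronglyMeasurableAtFilter isOpen_Ioo t ht
      · exact hgc'.continuousAt (isOpen_Ioo.mem_nhds ht)
    refine ⟨-(g t), hP.const_sub Θ, ?_⟩
    have hb := hbound t ⟨ht.1, ht.2.le⟩
    rw [abs_neg, abs_of_nonneg hb.1]
    have hhnn : 0 ≤ hfun n f t := hhfun_nn t ⟨ht.1, ht.2.le⟩
    calc g t ≤ c * Θ * hfun n f t := hb.2
      _ ≤ Θ * (Cr n f r)⁻¹ * hfun n f t := by nlinarith
  · -- equicontinuity
    intro ε hε
    refine ⟨ε / (c * Θ * M + 1), by positivity, ?_⟩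
    intro u hu hub s hs t ht hst
    obtain ⟨hbound, hgint, hgc⟩ := main u hu hub
    set g : ℝ → ℝ := fun σ => (∫ s in (0:ℝ)..σ, f s ^ (n - 1) * (c * u s)) / f σ ^ (n - 1)
      with hgdef
    have hsub : Tint n f u c Θ s - Tint n f u c Θ t = -∫ σ in t..s, g σ := by
      rw [Tint, Tint]
      have := intervalIntegral.integral_interval_sub_left (hgint s hs) (hgint t ht)
      rw [← this]
      ring
    rw [hsub, abs_neg]
    have hb : |∫ σ in t..s, g σ| ≤ c * Θ * M * |s - t| := by
      rw [← Real.norm_eq_abs]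
      apply intervalIntegral.norm_integral_le_of_norm_le_const
      intro x hx
      have hx' : x ∈ Ioc (min t s) (max t s) := hx
      have hx0 : (0:ℝ) < x := lt_of_le_of_lt (le_min ht.1 hs.1) hx'.1
      have hxr : x ≤ r := hx'.2.trans (max_le ht.2 hs.2)
      have hb := hbound x ⟨hx0, hxr⟩
      rw [Real.norm_eq_abs, abs_of_nonneg hb.1]
      calc g x ≤ c * Θ * hfun n f x := hb.2
        _ ≤ c * Θ * M := by
            apply mul_le_mul_of_nonneg_left (hM x ⟨hx0.le, hxr⟩)
            positivity
    calc |∫ σ in t..s, g σ| ≤ c * Θ * M * |s - t| := hb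
      _ ≤ c * Θ * M * (ε / (c * Θ * M + 1)) := by
          apply mul_le_mul_of_nonneg_left hst.le
          positivity
      _ < ε := by
          have h1 : c * Θ * M < c * Θ * M + 1 := by linarith
          calc c * Θ * M * (ε / (c * Θ * M + 1)) <
              (c * Θ * M + 1) * (ε / (c * Θ * M + 1)) := by
                apply mul_lt_mul_of_pos_right h1
                positivity
            _ = ε := by field_simp
end

section
/- Any fixed point u of T satisfies u(0) = Θ > 0, u is twice continuously differentiable on (0,r), and u solves the ODE u''(t) + (n−1)(f'(t)/f(t)) u'(t) + (a+λ) u(t) = 0 on (0,r) with u'(0⁺) = 0 (where the first derivative limit is taken from the right), i.e. u is a radial solution of Δu + (a+λ)u = 0 on the geodesic ball of the spherically symmetric manifold with warping function f. -/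
open MeasureTheory Set intervalIntegral

/-- Main work lemma: a globally continuous fixed point of the integral operator is `C²`
on `(0,r)`, solves the ODE there, and has derivative tending to `0` at `0⁺`. -/
lemma main_ODE_lemma (m : ℕ) (hm : 1 ≤ m) (r : ℝ) (hr : 0 < r)
    (f : ℝ → ℝ) (hfsmooth : ContDiff ℝ (⊤ : ℕ∞) f) (hf0 : f 0 = 0) (hf'0 : deriv f 0 = 1)
    (hfpos : ∀ t ∈ Ioc 0 r, 0 < f t)
    (c Θ : ℝ)
    (v : ℝ → ℝ) (hv : Continuous v)
    (hfix : ∀ t ∈ Icc 0 r, v t = Θ -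
      ∫ σ in (0:ℝ)..t, (∫ s in (0:ℝ)..σ, f s ^ m * (c * v s)) / f σ ^ m) :
    ContDiffOn ℝ 2 v (Ioo 0 r) ∧
      (∀ t ∈ Ioo 0 r, deriv (deriv v) t + (m : ℝ) * (deriv f t / f t) * deriv v t
        + c * v t = 0) ∧
      Filter.Tendsto (deriv v) (nhdsWithin 0 (Ioi 0)) (nhds 0) := by
  have hfc : Continuous f := hfsmooth.continuous
  have hf'c : Continuous (deriv f) := hfsmooth.continuous_deriv (by simp)
  set G : ℝ → ℝ := fun s => f s ^ m * (c * v s) with hGdef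
  have hG : Continuous G := ((hfc.pow m).mul (continuous_const.mul hv))
  set F : ℝ → ℝ := fun σ => ∫ s in (0:ℝ)..σ, G s with hFdef
  have hF : Continuous F :=
    intervalIntegral.continuous_primitive (fun a b => hG.intervalIntegrable a b) 0
  have hFd : ∀ σ, HasDerivAt F (G σ) σ := fun σ =>
    intervalIntegral.integral_hasDerivAt_right (hG.intervalIntegrable 0 σ)
      (hG.stronglyMeasurable.stronglyMeasurableAtFilter) hG.continuousAt
  set g : ℝ → ℝ := fun σ => F σ / f σ ^ m with hgdef
  -- δ where deriv f ∈ [1/2, 2]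
  obtain ⟨δ, hδ0, hδr, hfd⟩ : ∃ δ, 0 < δ ∧ δ ≤ r ∧
      ∀ x ∈ Icc (0:ℝ) δ, 1/2 ≤ deriv f x ∧ deriv f x ≤ 2 := by
    have h1 : ∀ᶠ x in nhds (0:ℝ), |deriv f x - 1| < 1/2 := by
      have h0 : Filter.Tendsto (deriv f) (nhds 0) (nhds 1) := hf'0 ▸ hf'c.tendsto 0
      exact h0.eventually (eventually_abs_sub_lt 1 (by norm_num : (0:ℝ) < 1/2))
    rcases Metric.eventually_nhds_iff.1 h1 with ⟨ε, hε, hball⟩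
    refine ⟨min (ε/2) r, lt_min (by linarith) hr, min_le_right _ _, fun x hx => ?_⟩
    have hxε : |x - 0| < ε := by
      rw [sub_zero, abs_of_nonneg hx.1]
      exact lt_of_le_of_lt (hx.2.trans (min_le_left _ _)) (by linarith)
    have := hball (show dist x 0 < ε by simpa [Real.dist_eq] using hxε)
    rw [abs_sub_lt_iff] at this
    constructor <;> linarith [this.1, this.2]
  -- bounds on f on [0, δ]
  have hfbound : ∀ σ ∈ Icc (0:ℝ) δ, σ/2 ≤ f σ ∧ f σ ≤ 2*σ := by
    intro σ hσ
    have hdiff : ∀ x ∈ uIcc (0:ℝ) σ, DifferentiableAt ℝ f x := fun x _ =>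
      hfsmooth.differentiable (by simp) x
    have hsub : uIcc (0:ℝ) σ = Icc 0 σ := uIcc_of_le hσ.1
    have hint : IntervalIntegrable (deriv f) volume 0 σ := hf'c.intervalIntegrable 0 σ
    have heq : (∫ x in (0:ℝ)..σ, deriv f x) = f σ - f 0 :=
      intervalIntegral.integral_deriv_eq_sub hdiff hint
    have hlo : (∫ x in (0:ℝ)..σ, (1/2 : ℝ)) ≤ ∫ x in (0:ℝ)..σ, deriv f x := by
      refine intervalIntegral.integral_mono_on hσ.1 (intervalIntegrable_const) hint ?_
      intro x hx
      exact (hfd x ⟨hx.1, hx.2.trans hσ.2⟩).1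
    have hhi : (∫ x in (0:ℝ)..σ, deriv f x) ≤ ∫ x in (0:ℝ)..σ, (2 : ℝ) := by
      refine intervalIntegral.integral_mono_on hσ.1 hint (intervalIntegrable_const) ?_
      intro x hx
      exact (hfd x ⟨hx.1, hx.2.trans hσ.2⟩).2
    rw [intervalIntegral.integral_const, smul_eq_mul] at hlo hhi
    rw [heq, hf0, sub_zero] at hlo hhi
    constructor <;> linarith
  -- bound M on |c * v|
  obtain ⟨M, hM⟩ : ∃ M, ∀ s ∈ Icc (0:ℝ) δ, |c * v s| ≤ M := by
    obtain ⟨C, hC⟩ := isCompact_Icc.exists_bound_of_continuousOn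
      ((continuous_const.mul hv).continuousOn (s := Icc (0:ℝ) δ))
    exact ⟨C, fun s hs => by rw [← Real.norm_eq_abs]; exact hC s hs⟩
  have hM0 : 0 ≤ M := le_trans (abs_nonneg _) (hM 0 ⟨le_rfl, hδ0.le⟩)
  -- the key estimate near 0
  have hest : ∀ σ ∈ Ioc (0:ℝ) δ, |g σ| ≤ (M * 4^m) * σ := by
    intro σ hσ
    have hσ0 : 0 < σ := hσ.1
    have hfσ := hfbound σ ⟨hσ0.le, hσ.2⟩
    have hfσpos : 0 < f σ := lt_of_lt_of_le (by linarith) hfσ.1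
    have hFbound : |F σ| ≤ 2^m * M * σ^(m+1) := by
      have h1 : |F σ| ≤ ∫ s in (0:ℝ)..σ, |G s| :=
        intervalIntegral.abs_integral_le_integral_abs hσ0.le
      have h2 : (∫ s in (0:ℝ)..σ, |G s|) ≤ ∫ s in (0:ℝ)..σ, 2^m * M * s^m := by
        refine intervalIntegral.integral_mono_on hσ0.le (hG.abs.intervalIntegrable 0 σ)
          (((continuous_const.mul (continuous_pow m))).intervalIntegrable 0 σ) ?_
        intro s hs
        have hsδ : s ∈ Icc (0:ℝ) δ := ⟨hs.1, hs.2.trans hσ.2⟩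
        have hfs := hfbound s hsδ
        have hfs0 : 0 ≤ f s := by linarith [hfs.1, hs.1]
        have : |G s| = f s ^ m * |c * v s| := by
          rw [hGdef]; simp only [abs_mul, abs_pow, abs_of_nonneg hfs0]
        rw [this]
        calc f s ^ m * |c * v s| ≤ (2*s)^m * M := by
              apply mul_le_mul (pow_le_pow_left₀ hfs0 hfs.2 m) (hM s hsδ) (abs_nonneg _)
              exact pow_nonneg (by linarith [hs.1]) m
          _ = 2^m * M * s^m := by rw [mul_pow]; ring
      have h3 : (∫ s in (0:ℝ)..σ, 2^m * M * s^m) = 2^m * M * (σ^(m+1)/(m+1)) := by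
        rw [intervalIntegral.integral_const_mul, integral_pow]
        norm_num
      have h4 : 2^m * M * (σ^(m+1)/(m+1)) ≤ 2^m * M * σ^(m+1) := by
        apply mul_le_mul_of_nonneg_left _ (by positivity)
        apply div_le_self (pow_nonneg hσ0.le _)
        have hm0 : (0:ℝ) ≤ (m:ℝ) := Nat.cast_nonneg m
        linarith
      calc |F σ| ≤ _ := h1
        _ ≤ _ := h2
        _ = _ := h3
        _ ≤ _ := h4
    have hfpow : σ^m / 2^m ≤ f σ ^ m := by
      rw [← div_pow]
      exact pow_le_pow_left₀ (by positivity) (by linarith [hfσ.1]) m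
    have hfpowpos : (0:ℝ) < σ^m / 2^m := by positivity
    have : |g σ| ≤ (2^m * M * σ^(m+1)) / (σ^m / 2^m) := by
      rw [hgdef]
      simp only [abs_div, abs_pow, abs_of_nonneg hfσpos.le]
      exact div_le_div₀ (by positivity) hFbound hfpowpos hfpow
    refine this.trans (le_of_eq ?_)
    have h2m : (2:ℝ)^m ≠ 0 := by positivity
    have hσm : σ^m ≠ 0 := by positivity
    have h4m : (4:ℝ)^m = 2^m * 2^m := by rw [← mul_pow]; norm_num
    rw [pow_succ]
    field_simp
    rw [h4m]; ring
  -- integrability of g on (0, r]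
  have hgm : Measurable g := hF.measurable.div ((hfc.pow m).measurable)
  have hgint : IntegrableOn g (Ioc 0 r) volume := by
    obtain ⟨C, hC⟩ := (isCompact_Icc (a := δ) (b := r)).exists_bound_of_continuousOn
      (hF.continuousOn.div ((hfc.pow m).continuousOn) (fun x hx =>
        pow_ne_zero m (hfpos x ⟨lt_of_lt_of_le hδ0 hx.1, hx.2⟩).ne'))
    refine Measure.integrableOn_of_bounded (measure_Ioc_lt_top).ne hgm.aestronglyMeasurable
      (M := max (M * 4^m * δ) C) ?_
    filter_upwards [ae_restrict_mem measurableSet_Ioc] with x hx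
    rcases le_or_gt x δ with h | h
    · refine le_trans ?_ (le_max_left _ _)
      have := hest x ⟨hx.1, h⟩
      rw [Real.norm_eq_abs]
      refine this.trans ?_
      apply mul_le_mul_of_nonneg_left h (by positivity)
    · exact le_trans (hC x ⟨h.le, hx.2⟩) (le_max_right _ _)
  have hint : ∀ t ∈ Icc (0:ℝ) r, IntervalIntegrable g volume 0 t := by
    intro t ht
    rw [intervalIntegrable_iff_integrableOn_Ioc_of_le ht.1]
    exact hgint.mono_set (Ioc_subset_Ioc le_rfl ht.2)
  -- derivative of v on (0, r)
  have hvd : ∀ t ∈ Ioo (0:ℝ) r, HasDerivAt v (-(g t)) t := by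
    intro t ht
    have hft : 0 < f t := hfpos t ⟨ht.1, ht.2.le⟩
    have hgcont : ContinuousAt g t :=
      (hF.continuousAt).div ((hfc.pow m).continuousAt) (pow_ne_zero m hft.ne')
    have hP : HasDerivAt (fun x => ∫ σ in (0:ℝ)..x, g σ) (g t) t :=
      intervalIntegral.integral_hasDerivAt_right (hint t ⟨ht.1.le, ht.2.le⟩)
        (hgm.stronglyMeasurable.stronglyMeasurableAtFilter) hgcont
    have hev : (fun x => Θ - ∫ σ in (0:ℝ)..x, g σ) =ᶠ[nhds t] v := by
      filter_upwards [Ioo_mem_nhds ht.1 ht.2] with x hx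
      exact (hfix x ⟨hx.1.le, hx.2.le⟩).symm
    have := ((hasDerivAt_const t Θ).sub hP).congr_of_eventuallyEq hev.symm
    simpa using this
  have hderiv : ∀ t ∈ Ioo (0:ℝ) r, deriv v t = -(g t) := fun t ht => (hvd t ht).deriv
  -- derivative of g on (0, r)
  have hgd : ∀ t ∈ Ioo (0:ℝ) r,
      HasDerivAt g (c * v t - (m:ℝ) * (deriv f t / f t) * g t) t := by
    intro t ht
    have hft : 0 < f t := hfpos t ⟨ht.1, ht.2.le⟩
    have hfder : HasDerivAt (fun σ => f σ ^ m) ((m:ℝ) * f t ^ (m-1) * deriv f t) t :=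
      ((hfsmooth.differentiable (by simp) t).hasDerivAt).pow m
    have hq := (hFd t).div hfder (pow_ne_zero m hft.ne')
    refine hq.congr_deriv (Eq.symm ?_)
    have hftne : f t ≠ 0 := hft.ne'
    obtain ⟨p, rfl⟩ : ∃ p, m = p + 1 := ⟨m - 1, (Nat.succ_pred_eq_of_pos hm).symm⟩
    rw [hGdef, hgdef]
    simp only [Nat.add_sub_cancel]
    field_simp
    ring
  refine ⟨?_, ?_, ?_⟩
  · -- C² on (0,r)
    have hopen : IsOpen (Ioo (0:ℝ) r) := isOpen_Ioo
    rw [show (2 : WithTop ℕ∞) = 1 + 1 by norm_num,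
      contDiffOn_succ_iff_deriv_of_isOpen hopen]
    refine ⟨fun t ht => ((hvd t ht).differentiableAt).differentiableWithinAt, by simp, ?_⟩
    have hg1 : ContDiffOn ℝ 1 g (Ioo 0 r) := by
      have hF1 : ContDiffOn ℝ 1 F (Ioo 0 r) := by
        rw [show (1 : WithTop ℕ∞) = 0 + 1 by norm_num,
          contDiffOn_succ_iff_deriv_of_isOpen hopen]
        refine ⟨fun t _ => ((hFd t).differentiableAt).differentiableWithinAt, by simp, ?_⟩
        rw [contDiffOn_zero]
        have : deriv F = G := funext fun σ => (hFd σ).deriv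
        rw [this]
        exact hG.continuousOn
      exact hF1.div (((hfsmooth.pow m).of_le (by simp)).contDiffOn) (fun x hx =>
        pow_ne_zero m (hfpos x ⟨hx.1, hx.2.le⟩).ne')
    exact hg1.neg.congr (fun x hx => hderiv x hx)
  · -- ODE
    intro t ht
    have hdd : deriv (deriv v) t = -(c * v t - (m:ℝ) * (deriv f t / f t) * g t) := by
      have hev : deriv v =ᶠ[nhds t] fun x => -(g x) := by
        filter_upwards [Ioo_mem_nhds ht.1 ht.2] with x hx
        exact hderiv x hx
      rw [hev.deriv_eq]
      exact ((hgd t ht).neg).deriv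
    rw [hdd, hderiv t ht]
    ring
  · -- limit of deriv v at 0⁺
    have hevb : ∀ᶠ x in nhdsWithin (0:ℝ) (Ioi 0), ‖deriv v x‖ ≤ (M * 4^m) * x := by
      filter_upwards [Ioo_mem_nhdsGT_of_mem ⟨le_rfl, lt_min hδ0 hr⟩] with x hx
      have hx1 : x ∈ Ioo (0:ℝ) r := ⟨hx.1, hx.2.trans_le (min_le_right _ _)⟩
      rw [hderiv x hx1, Real.norm_eq_abs, abs_neg]
      exact hest x ⟨hx.1, (hx.2.trans_le (min_le_left _ _)).le⟩
    have hlim : Filter.Tendsto (fun x => (M * 4^m) * x) (nhdsWithin (0:ℝ) (Ioi 0)) (nhds 0) := by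
      have h := ((continuous_const.mul continuous_id).tendsto (0:ℝ)
        : Filter.Tendsto (fun x : ℝ => (M * 4^m) * x) (nhds 0) (nhds ((M * 4^m) * 0)))
      simp only [Pi.mul_apply, id_eq, mul_zero] at h
      exact h.mono_left nhdsWithin_le_nhds
    exact squeeze_zero_norm' hevb hlim

/-- a fixed point `u` of `T` satisfies `u(0) = Θ > 0`, is `C²` on `(0,r)`,
solves the radial eigenvalue ODE `u'' + (n-1)(f'/f)u' + (a+λ)u = 0` there, and has
`u'(0⁺) = 0`. -/
theorem fixed_point_solves_ODE (n : ℕ) (hn : 2 ≤ n) (r : ℝ) (hr : 0 < r)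
    (f : ℝ → ℝ) (hfsmooth : ContDiff ℝ (⊤ : ℕ∞) f) (hf0 : f 0 = 0) (hf'0 : deriv f 0 = 1)
    (hfpos : ∀ t ∈ Ioc 0 r, 0 < f t)
    (hC : 0 < Cr n f r)
    (lam a Θ : ℝ) (hlam : 0 ≤ lam) (ha : 0 < a) (hΘ : 0 < Θ)
    (hsmall : lam + a < (Cr n f r)⁻¹)
    (u : ℝ → ℝ) (hu : ContinuousOn u (Icc 0 r))
    (hfix : ∀ t ∈ Icc 0 r, u t = Tint n f u (a + lam) Θ t) :
    u 0 = Θ ∧ 0 < Θ ∧ ContDiffOn ℝ 2 u (Ioo 0 r) ∧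
      (∀ t ∈ Ioo 0 r,
        deriv (deriv u) t + (n - 1 : ℝ) * (deriv f t / f t) * deriv u t
          + (a + lam) * u t = 0) ∧
      Filter.Tendsto (deriv u) (nhdsWithin 0 (Ioi 0)) (nhds 0) := by
  have hu0 : u 0 = Θ := by
    have := hfix 0 ⟨le_rfl, hr.le⟩
    simpa [Tint, intervalIntegral.integral_same] using this
  set m := n - 1 with hmdef
  have hm : 1 ≤ m := by omega
  set c := a + lam with hcdef
  -- extension of u
  set v : ℝ → ℝ := fun x => u (min r (max x 0)) with hvdef
  have hvc : Continuous v := by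
    apply hu.comp_continuous (continuous_const.min (continuous_id.max continuous_const))
    intro x
    exact ⟨le_min hr.le (le_max_right _ _), min_le_left _ _⟩
  have hveq : ∀ x ∈ Icc (0:ℝ) r, v x = u x := by
    intro x hx
    rw [hvdef]
    simp only [max_eq_left hx.1, min_eq_right hx.2]
  have hfix' : ∀ t ∈ Icc (0:ℝ) r, v t = Θ -
      ∫ σ in (0:ℝ)..t, (∫ s in (0:ℝ)..σ, f s ^ m * (c * v s)) / f σ ^ m := by
    intro t ht
    rw [hveq t ht, hfix t ht]
    unfold Tint
    congr 1
    apply intervalIntegral.integral_congr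
    intro σ hσ
    rw [uIcc_of_le ht.1] at hσ
    dsimp only
    congr 1
    apply intervalIntegral.integral_congr
    intro s hs
    rw [uIcc_of_le hσ.1] at hs
    dsimp only
    rw [hveq s ⟨hs.1, hs.2.trans (hσ.2.trans ht.2)⟩]
  obtain ⟨hC2, hODE, hlim⟩ := main_ODE_lemma m hm r hr f hfsmooth hf0 hf'0 hfpos c Θ v hvc hfix'
  have hdeq : ∀ t ∈ Ioo (0:ℝ) r, deriv u t = deriv v t := by
    intro t ht
    apply Filter.EventuallyEq.deriv_eq
    filter_upwards [Ioo_mem_nhds ht.1 ht.2] with x hx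
    exact (hveq x ⟨hx.1.le, hx.2.le⟩).symm
  have hcast : ((m : ℕ) : ℝ) = (n : ℝ) - 1 := by
    rw [hmdef]
    push_cast [Nat.cast_sub (by omega : 1 ≤ n)]
    ring
  refine ⟨hu0, hΘ, ?_, ?_, ?_⟩
  · exact hC2.congr (fun x hx => (hveq x ⟨hx.1.le, hx.2.le⟩).symm)
  · intro t ht
    have h1 : deriv (deriv u) t = deriv (deriv v) t := by
      apply Filter.EventuallyEq.deriv_eq
      filter_upwards [Ioo_mem_nhds ht.1 ht.2] with x hx
      exact hdeq x hx
    rw [h1, hdeq t ht, ← hveq t ⟨ht.1.le, ht.2.le⟩, ← hcast]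
    exact hODE t ht
  · apply hlim.congr'
    filter_upwards [Ioo_mem_nhdsGT_of_mem ⟨le_rfl, hr⟩] with x hx
    exact (hdeq x hx).symm
end

section
/- Let u be a fixed point in F = {v ∈ C([0,r]) : 0 ≤ v ≤ Θ} of the operator (Tu)(t) = Θ − (a+λ)∫₀^t ∫₀^σ (f(s)^{n-1}/f(σ)^{n-1}) u(s) ds dσ with a > 0, 0 ≤ λ, a+λ < C(r)^{-1}, Θ > 0. Then u is nonincreasing on [0,r] and u(r) ≥ Θ(1 − (a+λ)C(r)) > 0; in particular u is strictly positive on [0,r]. -/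
open MeasureTheory Set intervalIntegral

/-- a fixed point `u ∈ F` of `T` is nonincreasing on `[0,r]`, satisfies
`u(r) ≥ Θ(1 - (a+λ)C(r)) > 0`, and in particular is strictly positive on `[0,r]`. -/
theorem fixed_point_positive (n : ℕ) (hn : 2 ≤ n) (r : ℝ) (hr : 0 < r)
    (f : ℝ → ℝ) (hf : ContinuousOn f (Icc 0 r)) (hf0 : f 0 = 0)
    (hfpos : ∀ t ∈ Ioc 0 r, 0 < f t)
    (hC : 0 < Cr n f r)
    (lam a Θ : ℝ) (hlam : 0 ≤ lam) (ha : 0 < a) (hΘ : 0 < Θ)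
    (hsmall : lam + a < (Cr n f r)⁻¹)
    (u : ℝ → ℝ) (hu : ContinuousOn u (Icc 0 r))
    (hu0 : ∀ t ∈ Icc 0 r, 0 ≤ u t ∧ u t ≤ Θ)
    (hfix : ∀ t ∈ Icc 0 r, u t = Tint n f u (a + lam) Θ t) :
    AntitoneOn u (Icc 0 r) ∧
      u r ≥ Θ * (1 - (a + lam) * Cr n f r) ∧
      0 < Θ * (1 - (a + lam) * Cr n f r) ∧
      ∀ t ∈ Icc 0 r, 0 < u t := by
  set c := a + lam with hcdef
  have hc : 0 < c := by simp [hcdef]; linarith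
  set h : ℝ → ℝ := fun σ => (∫ s in (0:ℝ)..σ, f s ^ (n - 1)) / f σ ^ (n - 1) with hhdef
  set g : ℝ → ℝ := fun σ =>
    (∫ s in (0:ℝ)..σ, f s ^ (n - 1) * (c * u s)) / f σ ^ (n - 1) with hgdef
  have hCr : Cr n f r = ∫ σ in (0:ℝ)..r, h σ := rfl
  have hT : ∀ t, Tint n f u c Θ t = Θ - ∫ σ in (0:ℝ)..t, g σ := fun t => rfl
  have hfnn : ∀ s ∈ Icc (0:ℝ) r, 0 ≤ f s := by
    intro s hs
    rcases eq_or_lt_of_le hs.1 with h0 | h0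
    · simp [← h0, hf0]
    · exact (hfpos s ⟨h0, hs.2⟩).le
  have hsub : ∀ σ ∈ Icc (0:ℝ) r, Icc (0:ℝ) σ ⊆ Icc 0 r :=
    fun σ hσ => Icc_subset_Icc le_rfl hσ.2
  -- h is interval integrable since otherwise Cr = 0
  have hInt : IntervalIntegrable h volume 0 r := by
    by_contra H
    rw [hCr, intervalIntegral.integral_undef H] at hC
    exact lt_irrefl 0 hC
  -- nonnegativity of g and h
  have hgnn : ∀ σ ∈ Icc (0:ℝ) r, 0 ≤ g σ := by
    intro σ hσ
    apply div_nonneg _ (pow_nonneg (hfnn σ hσ) _)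
    apply intervalIntegral.integral_nonneg hσ.1
    intro s hs
    have h1 := hfnn s (hsub σ hσ hs)
    have h2 := (hu0 s (hsub σ hσ hs)).1
    positivity
  have hhnn : ∀ σ ∈ Icc (0:ℝ) r, 0 ≤ h σ := by
    intro σ hσ
    apply div_nonneg _ (pow_nonneg (hfnn σ hσ) _)
    apply intervalIntegral.integral_nonneg hσ.1
    intro s hs
    exact pow_nonneg (hfnn s (hsub σ hσ hs)) _
  -- pointwise domination g ≤ c Θ h
  have hgle : ∀ σ ∈ Icc (0:ℝ) r, g σ ≤ c * Θ * h σ := by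
    intro σ hσ
    have hcsub : Icc (0:ℝ) σ ⊆ Icc 0 r := hsub σ hσ
    have hcont1 : IntervalIntegrable (fun s => f s ^ (n - 1) * (c * u s)) volume 0 σ := by
      apply ContinuousOn.intervalIntegrable
      rw [uIcc_of_le hσ.1]
      exact ((hf.mono hcsub).pow _).mul (continuousOn_const.mul (hu.mono hcsub))
    have hcont2 : IntervalIntegrable (fun s => f s ^ (n - 1)) volume 0 σ := by
      apply ContinuousOn.intervalIntegrable
      rw [uIcc_of_le hσ.1]
      exact (hf.mono hcsub).pow _
    have hle : (∫ s in (0:ℝ)..σ, f s ^ (n - 1) * (c * u s)) ≤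
        ∫ s in (0:ℝ)..σ, c * Θ * f s ^ (n - 1) := by
      apply intervalIntegral.integral_mono_on hσ.1 hcont1 (hcont2.const_mul _)
      intro s hs
      have h1 : (0:ℝ) ≤ f s ^ (n - 1) := pow_nonneg (hfnn s (hcsub hs)) _
      have h2 := (hu0 s (hcsub hs)).2
      have h3 : f s ^ (n - 1) * (c * u s) ≤ f s ^ (n - 1) * (c * Θ) :=
        mul_le_mul_of_nonneg_left (mul_le_mul_of_nonneg_left h2 hc.le) h1
      calc f s ^ (n - 1) * (c * u s) ≤ f s ^ (n - 1) * (c * Θ) := h3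
        _ = c * Θ * f s ^ (n - 1) := by ring
    have heq : (∫ s in (0:ℝ)..σ, c * Θ * f s ^ (n - 1)) =
        c * Θ * ∫ s in (0:ℝ)..σ, f s ^ (n - 1) := intervalIntegral.integral_const_mul _ _
    rcases eq_or_lt_of_le (pow_nonneg (hfnn σ hσ) (n - 1)) with hz | hz
    · simp only [hgdef, hhdef, ← hz, div_zero, mul_zero, le_refl]
    · have : g σ ≤ (c * Θ * ∫ s in (0:ℝ)..σ, f s ^ (n - 1)) / f σ ^ (n - 1) := by
        show (∫ s in (0:ℝ)..σ, f s ^ (n - 1) * (c * u s)) / f σ ^ (n - 1) ≤ _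
        exact (div_le_div_iff_of_pos_right hz).2 (heq ▸ hle)
      calc g σ ≤ _ := this
        _ = c * Θ * h σ := by rw [hhdef]; ring
  -- integrability of g
  have hFcont : ContinuousOn (fun σ => ∫ s in (0:ℝ)..σ, f s ^ (n - 1) * (c * u s))
      (Icc 0 r) := by
    have : IntegrableOn (fun s => f s ^ (n - 1) * (c * u s)) (Icc 0 r) volume := by
      apply ContinuousOn.integrableOn_Icc
      exact (hf.pow _).mul (continuousOn_const.mul hu)
    have := intervalIntegral.continuousOn_primitive_interval (by rwa [uIcc_of_le hr.le])
    rwa [uIcc_of_le hr.le] at this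
  have hgmeas : AEStronglyMeasurable g (volume.restrict (Ioc (0:ℝ) r)) := by
    have h1 : AEMeasurable (fun σ => f σ ^ (n - 1)) (volume.restrict (Icc (0:ℝ) r)) :=
      ((hf.pow (n - 1)).aemeasurable measurableSet_Icc)
    have h2 := (hFcont.aemeasurable measurableSet_Icc).div h1
    have h3 : AEMeasurable g (volume.restrict (Icc (0:ℝ) r)) := h2
    exact (h3.mono_measure (Measure.restrict_mono Ioc_subset_Icc_self le_rfl)).aestronglyMeasurable
  have hgInt : IntervalIntegrable g volume 0 r := by
    rw [intervalIntegrable_iff_integrableOn_Ioc_of_le hr.le]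
    have hhInt : IntegrableOn h (Ioc 0 r) volume :=
      (intervalIntegrable_iff_integrableOn_Ioc_of_le hr.le).1 hInt
    apply Integrable.mono (hhInt.const_mul (c * Θ)) hgmeas
    rw [ae_restrict_iff' measurableSet_Ioc]
    apply ae_of_all
    intro σ hσ
    have hσ' : σ ∈ Icc (0:ℝ) r := Ioc_subset_Icc_self hσ
    rw [Real.norm_eq_abs, Real.norm_eq_abs, abs_of_nonneg (hgnn σ hσ'),
      abs_of_nonneg (mul_nonneg (mul_nonneg hc.le hΘ.le) (hhnn σ hσ'))]
    exact hgle σ hσ'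
  -- antitone
  have key : ∀ x ∈ Icc (0:ℝ) r, ∀ y ∈ Icc (0:ℝ) r, x ≤ y → u y ≤ u x := by
    intro x hx y hy hxy
    have hgx : IntervalIntegrable g volume 0 x :=
      hgInt.mono_set (by rw [uIcc_of_le hx.1, uIcc_of_le hr.le]; exact Icc_subset_Icc le_rfl hx.2)
    have hgxy : IntervalIntegrable g volume x y :=
      hgInt.mono_set (by rw [uIcc_of_le hxy, uIcc_of_le hr.le]; exact Icc_subset_Icc hx.1 hy.2)
    have hadd := intervalIntegral.integral_add_adjacent_intervals hgx hgxy
    have hnn : 0 ≤ ∫ σ in x..y, g σ := by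
      apply intervalIntegral.integral_nonneg hxy
      intro s hs
      exact hgnn s ⟨hx.1.trans hs.1, hs.2.trans hy.2⟩
    have hux : u x = Θ - ∫ σ in (0:ℝ)..x, g σ := by rw [hfix x hx, hT]
    have huy : u y = Θ - ∫ σ in (0:ℝ)..y, g σ := by rw [hfix y hy, hT]
    rw [hux, huy]
    linarith
  have hanti : AntitoneOn u (Icc 0 r) := fun x hx y hy hxy => key x hx y hy hxy
  -- bound on u r
  have hur : u r = Θ - ∫ σ in (0:ℝ)..r, g σ := by rw [hfix r ⟨hr.le, le_rfl⟩, hT]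
  have hbound : (∫ σ in (0:ℝ)..r, g σ) ≤ c * Θ * Cr n f r := by
    rw [hCr, ← intervalIntegral.integral_const_mul]
    exact intervalIntegral.integral_mono_on hr.le hgInt (hInt.const_mul _) hgle
  have hurge : u r ≥ Θ * (1 - c * Cr n f r) := by rw [hur]; nlinarith
  have hone : c * Cr n f r < 1 := by
    have h1 : c * Cr n f r < (Cr n f r)⁻¹ * Cr n f r := by
      apply mul_lt_mul_of_pos_right _ hC
      rw [hcdef]; linarith
    rwa [inv_mul_cancel₀ hC.ne'] at h1
  have hpos : 0 < Θ * (1 - c * Cr n f r) := mul_pos hΘ (by linarith)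
  refine ⟨hanti, hurge, hpos, ?_⟩
  intro t ht
  have := key t ht r ⟨hr.le, le_rfl⟩ ht.2
  linarith
end
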